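/- For an odd positive integer m, an odd integer p > 1, and any integer k, m^p T_p^{(k)}(1,m) = ∑_{i=1}^{p-2} ∑_{ν=0}^{p-i} C(p,ν) C(p-ν+1, i) E_ν^{(k)} E_i m^{p-i} + (p+1) E_p + m^p E_p^{(k)}(1) + 2·∑_{ν=0}^{p} C(p,ν) E_ν^{(k)} E_{p+1-ν} m^{ν-1}. -/

import Mathlib

open Finset

noncomputable def eulerNumber : ℕ → ℝ
  | 0 => 1
  | n + 1 => -(1/2) * ∑ l ∈ (range (n+1)).attach, (((n+1).choose l.1 : ℕ) : ℝ) * eulerNumber l.1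
  decreasing_by exact mem_range.mp l.2

/-- Euler polynomials `E_n(x)`, with generating function `2 e^{xt}/(e^t+1)`. -/
noncomputable def eulerPoly (n : ℕ) (x : ℝ) : ℝ :=
  ∑ l ∈ range (n+1), (n.choose l : ℝ) * eulerNumber l * x ^ (n - l)

noncomputable def genocchiNumber : ℕ → ℝ
  | 0 => 0
  | n + 1 => (1/2) * ((if n = 0 then 2 else 0) -
      ∑ l ∈ (range (n+1)).attach, (((n+1).choose l.1 : ℕ) : ℝ) * genocchiNumber l.1)
  decreasing_by exact mem_range.mp l.2

/-- Genocchi polynomials `G_n(x)`, with generating function `2t e^{xt}/(e^t+1)`. -/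
noncomputable def genocchiPoly (n : ℕ) (x : ℝ) : ℝ :=
  ∑ l ∈ range (n+1), (n.choose l : ℝ) * genocchiNumber l * x ^ (n - l)

/-- Signed Stirling numbers of the first kind `S₁(n,m)`. -/
def stirlingS1 : ℕ → ℕ → ℤ
  | 0, 0 => 1
  | 0, _ + 1 => 0
  | _ + 1, 0 => 0
  | n + 1, j + 1 => stirlingS1 n j - n * stirlingS1 n (j + 1)

/-- Poly-Genocchi polynomials `G_n^{(k)}(x)` of index `k`, with generating function
`2 Ei_k(log(1+t)) e^{xt}/(e^t+1)`. -/
noncomputable def polyGenocchiPoly (k : ℤ) (n : ℕ) (x : ℝ) : ℝ :=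
  ∑ j ∈ Icc 1 n, (n.choose j : ℝ) *
    (∑ m ∈ Icc 1 j, (stirlingS1 j m : ℝ) / (m : ℝ) ^ (k - 1)) * eulerPoly (n - j) x

/-- Poly-Euler polynomials `E_n^{(k)}(x) = G_{n+1}^{(k)}(x)/(n+1)`. -/
noncomputable def polyEulerPoly (k : ℤ) (n : ℕ) (x : ℝ) : ℝ :=
  polyGenocchiPoly k (n + 1) x / (n + 1)

noncomputable def polyEulerNumber (k : ℤ) (n : ℕ) : ℝ := polyEulerPoly k n 0

/-- Euler function `Ē_p(x) = E_p(x - ⌊x⌋)`. -/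
noncomputable def eulerFun (p : ℕ) (x : ℝ) : ℝ := eulerPoly p (Int.fract x)

/-- Poly-Euler function `Ē_p^{(k)}(x) = E_p^{(k)}(x - ⌊x⌋)`. -/
noncomputable def polyEulerFun (k : ℤ) (p : ℕ) (x : ℝ) : ℝ := polyEulerPoly k p (Int.fract x)

/-- Dedekind type DC sum `T_p(h,m)`. -/
noncomputable def dcSum (p h m : ℕ) : ℝ :=
  2 * ∑ μ ∈ Icc 1 (m - 1), (-1 : ℝ) ^ μ * ((μ : ℝ) / m) * eulerFun p ((h * μ : ℝ) / m)

/-- Poly-Dedekind type DC sum `T_p^{(k)}(h,m)`. -/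
noncomputable def polyDC (k : ℤ) (p h m : ℕ) : ℝ :=
  2 * ∑ μ ∈ Icc 1 (m - 1), (-1 : ℝ) ^ μ * ((μ : ℝ) / m) * polyEulerFun k p ((h * μ : ℝ) / m)

lemma euler_rec (n : ℕ) : ∑ l ∈ range (n+1), ((n+1).choose l : ℝ) * eulerNumber l = -2 * eulerNumber (n+1) := by
  rw [show eulerNumber (n+1) = -(1/2) * ∑ l ∈ (range (n+1)).attach, (((n+1).choose l.1 : ℕ) : ℝ) * eulerNumber l.1 from by rw [eulerNumber]]
  rw [Finset.sum_attach (range (n+1)) (fun l => ((n+1).choose l : ℝ) * eulerNumber l)]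
  ring

lemma eulerPoly_zero (n : ℕ) : eulerPoly n 0 = eulerNumber n := by
  rw [eulerPoly, Finset.sum_eq_single n]
  · simp
  · intro l hl hne
    simp only [mem_range] at hl
    rw [zero_pow (by omega : n - l ≠ 0)]
    ring
  · simp

lemma eulerPoly_one (n : ℕ) : eulerPoly n 1 = (if n = 0 then (2:ℝ) else 0) - eulerNumber n := by
  cases n with
  | zero => norm_num [eulerPoly, eulerNumber]
  | succ n =>
    rw [eulerPoly]
    simp only [one_pow, mul_one]
    rw [Finset.sum_range_succ, euler_rec]
    simp; ring

lemma master (N : ℕ) (g : ℕ → ℕ → ℝ) :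
    ∑ t ∈ range (N+1), ∑ u ∈ range (N+1-t), (N.choose t : ℝ) * ((N-t).choose u : ℝ) * g t u
  = ∑ l ∈ range (N+1), ∑ t ∈ range (l+1), (N.choose l : ℝ) * (l.choose t : ℝ) * g t (l-t) := by
  rw [Finset.sum_sigma', Finset.sum_sigma']
  apply Finset.sum_nbij' (i := fun a => (⟨a.1 + a.2, a.1⟩ : Σ _ : ℕ, ℕ))
    (j := fun a => (⟨a.2, a.1 - a.2⟩ : Σ _ : ℕ, ℕ))
  · rintro ⟨t, u⟩ h
    simp only [Finset.mem_sigma, Finset.mem_range] at h ⊢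
    omega
  · rintro ⟨l, t⟩ h
    simp only [Finset.mem_sigma, Finset.mem_range] at h ⊢
    omega
  · rintro ⟨t, u⟩ h; simp
  · rintro ⟨l, t⟩ h
    simp only [Finset.mem_sigma, Finset.mem_range] at h
    simp only [Sigma.mk.inj_iff, heq_eq_eq]
    exact ⟨by omega, trivial⟩
  · rintro ⟨t, u⟩ h
    simp only [Finset.mem_sigma, Finset.mem_range] at h
    simp only [Nat.add_sub_cancel_left]
    have hc : (N.choose (t+u) : ℝ) * ((t+u).choose t : ℝ) = (N.choose t : ℝ) * ((N - t).choose u : ℝ) := by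
      rw [← Nat.cast_mul, ← Nat.cast_mul,
        Nat.choose_mul (n := N) (k := t + u) (s := t) (by omega),
        Nat.add_sub_cancel_left]
    rw [hc]

lemma eulerPoly_add (n : ℕ) (x y : ℝ) :
    eulerPoly n (x + y) = ∑ l ∈ range (n+1), (n.choose l : ℝ) * eulerPoly l y * x^(n-l) := by
  have lhs : eulerPoly n (x + y)
      = ∑ t ∈ range (n+1), ∑ u ∈ range (n+1-t), (n.choose t : ℝ) * ((n-t).choose u : ℝ) *
          (eulerNumber t * y^u * x^(n-t-u)) := by
    rw [eulerPoly]
    refine Finset.sum_congr rfl fun t ht => ?_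
    simp only [mem_range] at ht
    rw [add_comm x y, add_pow, show n + 1 - t = (n - t) + 1 by omega, Finset.mul_sum]
    refine Finset.sum_congr rfl fun u hu => ?_
    simp only [mem_range] at hu
    ring
  rw [lhs, master]
  refine Finset.sum_congr rfl fun l hl => ?_
  simp only [mem_range] at hl
  rw [eulerPoly, Finset.mul_sum, Finset.sum_mul]
  refine Finset.sum_congr rfl fun t ht => ?_
  simp only [mem_range] at ht
  rw [show n - t - (l - t) = n - l by omega]
  ring

lemma eulerPoly_step (n : ℕ) (x : ℝ) :
    eulerPoly n (x + 1) + eulerPoly n x = 2 * x^n := by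
  rw [eulerPoly_add, eulerPoly]
  rw [← Finset.sum_add_distrib]
  have : ∀ l ∈ range (n+1),
      (n.choose l : ℝ) * eulerPoly l 1 * x^(n-l) + (n.choose l : ℝ) * eulerNumber l * x^(n-l)
      = if l = 0 then 2 * x^n else 0 := by
    intro l hl
    rw [eulerPoly_one]
    split
    · subst ‹l = 0›
      simp only [eulerNumber, Nat.choose_zero_right, Nat.cast_one, Nat.sub_zero, if_true]
      ring
    · ring
  rw [Finset.sum_congr rfl this, Finset.sum_ite_eq' (range (n+1)) 0 (fun _ => 2*x^n)]
  simp

noncomputable def eulerP (n : ℕ) : Polynomial ℝ :=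
  ∑ l ∈ range (n+1), Polynomial.C ((n.choose l : ℝ) * eulerNumber l) * Polynomial.X^(n-l)

lemma eulerP_eval (n : ℕ) (x : ℝ) : (eulerP n).eval x = eulerPoly n x := by
  rw [eulerP, Polynomial.eval_finset_sum, eulerPoly]
  simp

lemma poly_antiperiodic_eq_zero (f : Polynomial ℝ) (h : ∀ x : ℝ, f.eval (x+1) = - f.eval x) :
    f = 0 := by
  have h2 : ∀ x : ℝ, f.eval (x+2) = f.eval x := by
    intro x
    have := h (x+1)
    rw [show x + 1 + 1 = x + 2 by ring] at this
    rw [this, h x, neg_neg]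
  have key : ∀ j : ℕ, f.eval (2*(j:ℝ)) = f.eval 0 := by
    intro j
    induction j with
    | zero => norm_num
    | succ j ih =>
      push_cast
      rw [show (2:ℝ)*((j:ℝ)+1) = 2*(j:ℝ)+2 by ring, h2, ih]
  have hg : f - Polynomial.C (f.eval 0) = 0 := by
    apply Polynomial.eq_zero_of_infinite_isRoot
    apply Set.infinite_of_injective_forall_mem (f := fun j : ℕ => (2*(j:ℝ) : ℝ))
    · intro a b hab
      simp only at hab
      have : (a:ℝ) = b := by linarith
      exact_mod_cast this
    · intro j
      simp only [Set.mem_setOf_eq, Polynomial.IsRoot, Polynomial.eval_sub, Polynomial.eval_C]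
      rw [key j, sub_self]
  have hf : f = Polynomial.C (f.eval 0) := by linear_combination (norm := ring_nf) hg
  have h1 := h 0
  rw [hf] at h1
  simp only [Polynomial.eval_C, zero_add] at h1
  rw [hf, show f.eval 0 = 0 by linarith [h1], map_zero]

lemma euler_reflect (n : ℕ) (x : ℝ) : eulerPoly n (1 - x) = (-1:ℝ)^n * eulerPoly n x := by
  have hF : (eulerP n).comp (Polynomial.C 1 - Polynomial.X)
      - Polynomial.C ((-1:ℝ)^n) * eulerP n = 0 := by
    apply poly_antiperiodic_eq_zero
    intro y
    simp only [Polynomial.eval_sub, Polynomial.eval_comp, Polynomial.eval_mul, Polynomial.eval_C,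
      Polynomial.eval_X, eulerP_eval]
    have e1 := eulerPoly_step n y
    have e3 := eulerPoly_step n (-y)
    have hn : ((-y):ℝ)^n = (-1:ℝ)^n * y^n := by rw [neg_pow]
    rw [show (1:ℝ) - (y+1) = -y by ring, show (1:ℝ) - y = -y + 1 by ring]
    linear_combination e3 - (-1:ℝ)^n * e1 + 2*hn
  have := congrArg (Polynomial.eval x) hF
  simp only [Polynomial.eval_sub, Polynomial.eval_comp, Polynomial.eval_mul, Polynomial.eval_C,
    Polynomial.eval_X, eulerP_eval, Polynomial.eval_zero] at this
  linarith [this]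

lemma euler_even_zero (n : ℕ) (hn : Even n) (h0 : n ≠ 0) : eulerNumber n = 0 := by
  have h1 := euler_reflect n 0
  rw [sub_zero, eulerPoly_zero, eulerPoly_one, if_neg h0, hn.neg_one_pow, one_mul] at h1
  linarith

lemma telescope (f : ℕ → ℝ) (m : ℕ) :
    ∑ μ ∈ range m, (-1:ℝ)^μ * (f (μ+1) + f μ) = f 0 + (-1:ℝ)^(m+1) * f m := by
  induction m with
  | zero => norm_num
  | succ m ih =>
    rw [Finset.sum_range_succ, ih, pow_succ, pow_succ]
    ring

lemma alt_power (r m : ℕ) (hm : Odd m) (hr : 1 ≤ r) :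
    2 * ∑ μ ∈ Icc 1 (m-1), (-1:ℝ)^μ * (μ:ℝ)^r = eulerNumber r + eulerPoly r m := by
  have hm1 : 1 ≤ m := hm.pos
  have hIcc : Icc 1 (m-1) = Ico 1 m := by
    rw [show m = (m-1)+1 by omega, Finset.Ico_add_one_right_eq_Icc]
    simp
  have hsum : ∑ μ ∈ range m, (-1:ℝ)^μ * (μ:ℝ)^r = ∑ μ ∈ Icc 1 (m-1), (-1:ℝ)^μ * (μ:ℝ)^r := by
    rw [hIcc, Finset.range_eq_Ico, Finset.sum_eq_sum_Ico_succ_bot (by omega : 0 < m)]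
    simp [zero_pow (show r ≠ 0 by omega)]
  rw [← hsum, Finset.mul_sum]
  have h2 : ∀ μ ∈ range m, 2 * ((-1:ℝ)^μ * (μ:ℝ)^r)
      = (-1:ℝ)^μ * (eulerPoly r ((μ:ℝ)+1) + eulerPoly r μ) := by
    intro μ _
    rw [eulerPoly_step r (μ:ℝ)]
    ring
  rw [Finset.sum_congr rfl h2]
  have ht := telescope (fun μ => eulerPoly r (μ:ℝ)) m
  have hcast : ∀ μ : ℕ, eulerPoly r ((μ:ℝ)+1) = eulerPoly r ((μ+1 : ℕ) : ℝ) := by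
    intro μ; push_cast; ring_nf
  rw [Finset.sum_congr rfl (fun μ _ => by rw [hcast μ]), ht, Nat.cast_zero, eulerPoly_zero,
    (hm.add_one).neg_one_pow, one_mul]

lemma polyGenocchi_ext (k : ℤ) (N : ℕ) (x : ℝ) :
    polyGenocchiPoly k N x = ∑ j ∈ range (N+1), (N.choose j : ℝ) *
      (if j = 0 then 0 else ∑ t ∈ Icc 1 j, (stirlingS1 j t : ℝ) / (t : ℝ) ^ (k - 1)) *
      eulerPoly (N - j) x := by
  rw [polyGenocchiPoly]
  rw [Finset.sum_congr rfl (fun j hj => by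
    rw [if_neg (by simp only [mem_Icc] at hj; omega : ¬ j = 0)] :
    ∀ j ∈ Icc 1 N, (N.choose j : ℝ) * (∑ t ∈ Icc 1 j, (stirlingS1 j t : ℝ) / (t : ℝ) ^ (k - 1)) *
      eulerPoly (N - j) x = (N.choose j : ℝ) *
      (if j = 0 then 0 else ∑ t ∈ Icc 1 j, (stirlingS1 j t : ℝ) / (t : ℝ) ^ (k - 1)) *
      eulerPoly (N - j) x)]
  apply Finset.sum_subset
  · intro j hj
    simp only [mem_Icc, mem_range] at hj ⊢
    omega
  · intro j hj hj2
    simp only [mem_Icc, mem_range] at hj hj2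
    have : j = 0 := by omega
    subst this
    simp

lemma genocchi_appell (k : ℤ) (N : ℕ) (x : ℝ) :
    polyGenocchiPoly k N x
      = ∑ l ∈ range (N+1), (N.choose l : ℝ) * polyGenocchiPoly k l 0 * x^(N-l) := by
  have lhs : polyGenocchiPoly k N x
      = ∑ j ∈ range (N+1), ∑ u ∈ range (N+1-j), (N.choose j : ℝ) * ((N-j).choose u : ℝ) *
          ((if j = 0 then (0:ℝ) else ∑ t ∈ Icc 1 j, (stirlingS1 j t : ℝ) / (t : ℝ) ^ (k - 1))
            * eulerNumber u * x^(N-j-u)) := by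
    rw [polyGenocchi_ext]
    refine Finset.sum_congr rfl fun j hj => ?_
    simp only [mem_range] at hj
    rw [eulerPoly, show N + 1 - j = (N - j) + 1 by omega, Finset.mul_sum]
    refine Finset.sum_congr rfl fun u hu => ?_
    ring
  rw [lhs, master]
  refine Finset.sum_congr rfl fun l hl => ?_
  simp only [mem_range] at hl
  rw [polyGenocchi_ext, Finset.mul_sum, Finset.sum_mul]
  refine Finset.sum_congr rfl fun j hj => ?_
  simp only [mem_range] at hj
  rw [show N - j - (l - j) = N - l by omega, eulerPoly_zero]
  ring

lemma polyEulerNumber_succ (k : ℤ) (ν : ℕ) :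
    polyGenocchiPoly k (ν+1) 0 = ((ν:ℝ)+1) * polyEulerNumber k ν := by
  rw [polyEulerNumber, polyEulerPoly]
  have : ((ν:ℝ)+1) ≠ 0 := by positivity
  field_simp

lemma polyEuler_expand (k : ℤ) (n : ℕ) (x : ℝ) :
    polyEulerPoly k n x = ∑ ν ∈ range (n+1), (n.choose ν : ℝ) * polyEulerNumber k ν * x^(n-ν) := by
  rw [polyEulerPoly, genocchi_appell, Finset.sum_range_succ', div_eq_iff (by positivity : ((n:ℝ)+1) ≠ 0)]
  have h0 : polyGenocchiPoly k 0 0 = 0 := by simp [polyGenocchiPoly]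
  rw [h0]
  simp only [mul_zero, zero_mul, add_zero, Nat.choose_zero_right]
  rw [Finset.sum_mul]
  refine Finset.sum_congr rfl fun ν hν => ?_
  simp only [mem_range] at hν
  rw [polyEulerNumber_succ, show n + 1 - (ν + 1) = n - ν by omega]
  have hch : ((n+1).choose (ν+1) : ℝ) * ((ν:ℝ)+1) = ((n:ℝ)+1) * (n.choose ν : ℝ) := by
    have h := Nat.add_one_mul_choose_eq n ν
    have h2 : ((n+1) * n.choose ν : ℕ) = ((n+1).choose (ν+1) * (ν+1) : ℕ) := by
      simpa [Nat.succ_eq_add_one] using h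
    have h3 := congrArg (fun z : ℕ => (z : ℝ)) h2
    push_cast at h3
    linarith
  linear_combination (polyEulerNumber k ν * x^(n-ν)) * hch

lemma polyEulerNumber_zero (k : ℤ) : polyEulerNumber k 0 = 1 := by
  have h1 : polyGenocchiPoly k 1 0 = 1 := by
    rw [polyGenocchiPoly]
    rw [show Icc 1 1 = {1} by rfl]
    rw [Finset.sum_singleton, show Icc 1 1 = {1} by rfl, Finset.sum_singleton, eulerPoly_zero]
    norm_num [show stirlingS1 1 1 = 1 by simp [stirlingS1],
      show eulerNumber 0 = 1 by rw [eulerNumber]]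
  rw [polyEulerNumber, polyEulerPoly, h1]
  norm_num

lemma swap_tri (A : ℕ) (g : ℕ → ℕ → ℝ) :
    ∑ ν ∈ range A, ∑ s ∈ range (A - ν), g ν s
      = ∑ s ∈ range A, ∑ ν ∈ range (A - s), g ν s := by
  rw [Finset.sum_sigma', Finset.sum_sigma']
  apply Finset.sum_nbij' (i := fun a => (⟨a.2, a.1⟩ : Σ _ : ℕ, ℕ))
    (j := fun a => (⟨a.2, a.1⟩ : Σ _ : ℕ, ℕ))
  · rintro ⟨ν, s⟩ h
    simp only [Finset.mem_sigma, Finset.mem_range] at h ⊢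
    omega
  · rintro ⟨s, ν⟩ h
    simp only [Finset.mem_sigma, Finset.mem_range] at h ⊢
    omega
  · rintro ⟨ν, s⟩ h; rfl
  · rintro ⟨s, ν⟩ h; rfl
  · rintro ⟨ν, s⟩ h; rfl

lemma eulerNumber_zero : eulerNumber 0 = 1 := by rw [eulerNumber]

lemma eulerPoly_top_expand (r : ℕ) (M : ℝ) :
    eulerPoly (r+1) M = (∑ s ∈ range r, ((r+1).choose (s+1) : ℝ) * eulerNumber (s+1) * M^(r-s))
      + M^(r+1) + eulerNumber (r+1) := by
  rw [eulerPoly, Finset.sum_range_succ, Finset.sum_range_succ']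
  simp only [Nat.choose_self, Nat.cast_one, one_mul, Nat.sub_self, pow_zero, mul_one,
    Nat.choose_zero_right, Nat.sub_zero, eulerNumber_zero]
  have : ∀ s ∈ range r, ((r+1).choose (s+1) : ℝ) * eulerNumber (s+1) * M^(r+1-(s+1))
      = ((r+1).choose (s+1) : ℝ) * eulerNumber (s+1) * M^(r-s) := by
    intro s hs
    rw [show r+1-(s+1) = r - s by omega]
  rw [Finset.sum_congr rfl this]

theorem stmt15 (k : ℤ) (m p : ℕ) (hm : Odd m) (hp : Odd p) (hp1 : 1 < p) :
    (m : ℝ) ^ p * polyDC k p 1 m =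
      (∑ i ∈ Icc 1 (p - 2), ∑ ν ∈ range (p - i + 1),
        (p.choose ν : ℝ) * ((p - ν + 1).choose i : ℝ) * polyEulerNumber k ν *
          eulerNumber i * (m : ℝ) ^ (p - i))
      + ((p : ℝ) + 1) * eulerNumber p + (m : ℝ) ^ p * polyEulerPoly k p 1
      + 2 * ∑ ν ∈ range (p + 1), (p.choose ν : ℝ) * polyEulerNumber k ν *
          eulerNumber (p + 1 - ν) * (m : ℝ) ^ ((ν : ℤ) - 1) := by
  have hm1 : 1 ≤ m := hm.pos
  have hM : (0:ℝ) < (m:ℝ) := by exact_mod_cast Nat.pos_of_ne_zero (by omega)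
  have hMne : (m:ℝ) ≠ 0 := ne_of_gt hM
  have hp3 : 3 ≤ p := by rcases hp with ⟨t, ht⟩; omega
  obtain ⟨q, hpq⟩ : ∃ q, p = q + 2 := ⟨p - 2, by omega⟩
  have hq : Odd q := by rcases hp with ⟨t, ht⟩; exact ⟨t-1, by omega⟩
  have hq1 : 1 ≤ q := hq.pos
  -- Step 0: remove the fract
  have h0 : polyDC k p 1 m = 2 * ∑ μ ∈ Icc 1 (m-1),
      (-1:ℝ)^μ * ((μ:ℝ)/(m:ℝ)) * polyEulerPoly k p ((μ:ℝ)/(m:ℝ)) := by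
    rw [polyDC]
    congr 1
    refine Finset.sum_congr rfl fun μ hμ => ?_
    simp only [mem_Icc] at hμ
    have hlt : (μ:ℝ)/(m:ℝ) < 1 := by
      rw [div_lt_one hM]; exact_mod_cast (by omega : μ < m)
    have hge : (0:ℝ) ≤ (μ:ℝ)/(m:ℝ) := by positivity
    rw [Nat.cast_one, one_mul, polyEulerFun, Int.fract_eq_self.mpr ⟨hge, hlt⟩]
  -- Step 1: expand and swap
  have key1 : (m:ℝ)^p * polyDC k p 1 m
      = ∑ ν ∈ range (p+1), (p.choose ν : ℝ) * polyEulerNumber k ν * ((m:ℝ)^ν / (m:ℝ)) *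
          (2 * ∑ μ ∈ Icc 1 (m-1), (-1:ℝ)^μ * (μ:ℝ)^(p+1-ν)) := by
    rw [h0]
    have hper : ∀ μ ∈ Icc 1 (m-1),
        (m:ℝ)^p * (2 * ((-1:ℝ)^μ * ((μ:ℝ)/(m:ℝ)) * polyEulerPoly k p ((μ:ℝ)/(m:ℝ))))
        = ∑ ν ∈ range (p+1), (p.choose ν : ℝ) * polyEulerNumber k ν * ((m:ℝ)^ν / (m:ℝ)) *
            (2 * ((-1:ℝ)^μ * (μ:ℝ)^(p+1-ν))) := by
      intro μ hμ
      rw [polyEuler_expand, Finset.mul_sum, Finset.mul_sum, Finset.mul_sum]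
      refine Finset.sum_congr rfl fun ν hν => ?_
      simp only [mem_range] at hν
      rw [div_pow, show p+1-ν = (p-ν)+1 by omega, pow_succ,
        show (m:ℝ)^p = (m:ℝ)^(p-ν) * (m:ℝ)^ν by rw [← pow_add]; congr 1; omega]
      have hpow : ((m:ℝ)^(p-ν)) ≠ 0 := pow_ne_zero _ hMne
      field_simp
    rw [Finset.mul_sum, Finset.mul_sum, Finset.sum_congr rfl hper, Finset.sum_comm]
    refine Finset.sum_congr rfl fun ν hν => ?_
    rw [Finset.mul_sum, Finset.mul_sum]
  -- Step 2: alternating power sums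
  have key2 : (m:ℝ)^p * polyDC k p 1 m
      = (∑ ν ∈ range (p+1), (p.choose ν : ℝ) * polyEulerNumber k ν * ((m:ℝ)^ν / (m:ℝ)) *
          eulerNumber (p+1-ν))
        + ∑ ν ∈ range (p+1), (p.choose ν : ℝ) * polyEulerNumber k ν * ((m:ℝ)^ν / (m:ℝ)) *
          eulerPoly (p+1-ν) (m:ℝ) := by
    rw [key1, ← Finset.sum_add_distrib]
    refine Finset.sum_congr rfl fun ν hν => ?_
    simp only [mem_range] at hν
    rw [alt_power (p+1-ν) m hm (by omega)]
    ring
  -- Step 3: expand eulerPoly (p+1-ν) m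
  have key3 : ∑ ν ∈ range (p+1), (p.choose ν : ℝ) * polyEulerNumber k ν * ((m:ℝ)^ν / (m:ℝ)) *
          eulerPoly (p+1-ν) (m:ℝ)
      = (∑ ν ∈ range (p+1), ∑ s ∈ range (p-ν),
            (p.choose ν : ℝ) * ((p+1-ν).choose (s+1) : ℝ) * polyEulerNumber k ν *
              eulerNumber (s+1) * (m:ℝ)^(p-(s+1)))
        + (∑ ν ∈ range (p+1), (p.choose ν : ℝ) * polyEulerNumber k ν * (m:ℝ)^p)
        + ∑ ν ∈ range (p+1), (p.choose ν : ℝ) * polyEulerNumber k ν * ((m:ℝ)^ν / (m:ℝ)) *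
            eulerNumber (p+1-ν) := by
    rw [← Finset.sum_add_distrib, ← Finset.sum_add_distrib]
    refine Finset.sum_congr rfl fun ν hν => ?_
    simp only [mem_range] at hν
    have hgen : eulerPoly (p+1-ν) (m:ℝ)
        = (∑ s ∈ range (p-ν), ((p+1-ν).choose (s+1) : ℝ) * eulerNumber (s+1) * (m:ℝ)^(p-ν-s))
          + (m:ℝ)^(p+1-ν) + eulerNumber (p+1-ν) := by
      have h1 : p+1-ν = (p-ν)+1 := by omega
      rw [h1, eulerPoly_top_expand]
    rw [hgen, mul_add, mul_add, Finset.mul_sum]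
    congr 1
    · congr 1
      · refine Finset.sum_congr rfl fun s hs => ?_
        simp only [mem_range] at hs
        rw [show p-(s+1) = (p-ν-s-1)+ν by omega, pow_add,
          show (p:ℕ)-ν-s = (p-ν-s-1)+1 by omega, pow_succ]
        field_simp
        rw [Nat.add_sub_cancel]
      · rw [show p+1-ν = (p-ν+1) by omega, show (p:ℕ) = (p-ν)+ν by omega, pow_add, pow_succ]
        field_simp
        rw [Nat.add_sub_cancel]
        ring
  -- Step 4: the s-sum identities
  have hdrop : ∑ ν ∈ range (p+1), ∑ s ∈ range (p-ν),
        (p.choose ν : ℝ) * ((p+1-ν).choose (s+1) : ℝ) * polyEulerNumber k ν *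
          eulerNumber (s+1) * (m:ℝ)^(p-(s+1))
      = ∑ s ∈ range p, ∑ ν ∈ range (p-s),
        (p.choose ν : ℝ) * ((p+1-ν).choose (s+1) : ℝ) * polyEulerNumber k ν *
          eulerNumber (s+1) * (m:ℝ)^(p-(s+1)) := by
    rw [Finset.sum_range_succ, show p - p = 0 from by omega]
    simp only [Finset.range_zero, Finset.sum_empty, add_zero]
    exact swap_tri p _
  have hsplit : ∑ s ∈ range p, ∑ ν ∈ range (p-s),
        (p.choose ν : ℝ) * ((p+1-ν).choose (s+1) : ℝ) * polyEulerNumber k ν *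
          eulerNumber (s+1) * (m:ℝ)^(p-(s+1))
      = (∑ s ∈ range q, ∑ ν ∈ range (p-s),
          (p.choose ν : ℝ) * ((p+1-ν).choose (s+1) : ℝ) * polyEulerNumber k ν *
            eulerNumber (s+1) * (m:ℝ)^(p-(s+1)))
        + (∑ ν ∈ range (p-q),
          (p.choose ν : ℝ) * ((p+1-ν).choose (q+1) : ℝ) * polyEulerNumber k ν *
            eulerNumber (q+1) * (m:ℝ)^(p-(q+1)))
        + (∑ ν ∈ range (p-(q+1)),
          (p.choose ν : ℝ) * ((p+1-ν).choose ((q+1)+1) : ℝ) * polyEulerNumber k ν *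
            eulerNumber ((q+1)+1) * (m:ℝ)^(p-((q+1)+1))) := by
    rw [show range p = range (q+2) from by rw [hpq], Finset.sum_range_succ, Finset.sum_range_succ]
  have hmid : ∑ ν ∈ range (p-q),
        (p.choose ν : ℝ) * ((p+1-ν).choose (q+1) : ℝ) * polyEulerNumber k ν *
          eulerNumber (q+1) * (m:ℝ)^(p-(q+1)) = 0 := by
    apply Finset.sum_eq_zero
    intro ν hν
    rw [euler_even_zero (q+1) hq.add_one (by omega)]
    ring
  have htop : ∑ ν ∈ range (p-(q+1)),
        (p.choose ν : ℝ) * ((p+1-ν).choose ((q+1)+1) : ℝ) * polyEulerNumber k ν *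
          eulerNumber ((q+1)+1) * (m:ℝ)^(p-((q+1)+1))
      = ((p:ℝ)+1) * eulerNumber p := by
    rw [show p - (q+1) = 1 from by omega, Finset.sum_range_one]
    rw [show p + 1 - 0 = (q+2)+1 from by omega, show (q+1)+1 = q+2 from rfl]
    rw [Nat.choose_succ_self_right, polyEulerNumber_zero]
    rw [show p - (q+2) = 0 from by omega, pow_zero, show q+2 = p from by omega]
    push_cast [hpq, Nat.choose_zero_right]
    ring
  have hmain : ∑ i ∈ Icc 1 (p - 2), ∑ ν ∈ range (p - i + 1),
        (p.choose ν : ℝ) * ((p - ν + 1).choose i : ℝ) * polyEulerNumber k ν *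
          eulerNumber i * (m : ℝ) ^ (p - i)
      = ∑ s ∈ range q, ∑ ν ∈ range (p-s),
          (p.choose ν : ℝ) * ((p+1-ν).choose (s+1) : ℝ) * polyEulerNumber k ν *
            eulerNumber (s+1) * (m:ℝ)^(p-(s+1)) := by
    rw [show Icc 1 (p-2) = Icc 1 q from by rw [hpq]; norm_num, ← Finset.Ico_add_one_right_eq_Icc,
      Finset.sum_Ico_eq_sum_range]
    rw [show q + 1 - 1 = q from rfl]
    refine Finset.sum_congr rfl fun s hs => ?_
    simp only [mem_range] at hs
    rw [show p - (1+s) + 1 = p - s from by omega]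
    refine Finset.sum_congr rfl fun ν hν => ?_
    simp only [mem_range] at hν
    rw [show p - ν + 1 = p + 1 - ν from by omega, show 1 + s = s + 1 from by omega]
  have hB0 : ∑ ν ∈ range (p+1), (p.choose ν : ℝ) * polyEulerNumber k ν * (m:ℝ)^p
      = (m:ℝ)^p * polyEulerPoly k p 1 := by
    rw [polyEuler_expand, Finset.mul_sum]
    refine Finset.sum_congr rfl fun ν hν => ?_
    rw [one_pow]
    ring
  have hT4 : ∑ ν ∈ range (p + 1), (p.choose ν : ℝ) * polyEulerNumber k ν *
          eulerNumber (p + 1 - ν) * (m : ℝ) ^ ((ν : ℤ) - 1)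
      = ∑ ν ∈ range (p+1), (p.choose ν : ℝ) * polyEulerNumber k ν * ((m:ℝ)^ν / (m:ℝ)) *
          eulerNumber (p+1-ν) := by
    refine Finset.sum_congr rfl fun ν hν => ?_
    rw [show ((m:ℝ))^((ν:ℤ)-1) = (m:ℝ)^ν / (m:ℝ) from by
      rw [zpow_sub₀ hMne, zpow_natCast, zpow_one]]
    ring
  rw [key2, key3, hdrop, hsplit, hmid, htop, hmain, hB0, hT4]
  ring
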